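/- arXiv:1501.03907 — 5 statements merged into one kernel-verified Lean document; each statement's English description precedes it below -/
import Mathlib

section
/- Let k ≥ 3 be an integer and let C be a k-rotationally symmetric planar convex body with center of symmetry p, inradius r and circumradius R. Let x₁ ∈ ∂C satisfy dist(p, x₁) = r, let x₁, …, x_k be the images of x₁ under the iterates of the rotation ρ about p by angle 2π/k, and let C₁, …, C_k be the subsets of the associated standard k-partition, i.e. the intersections of C with the k closed angular sectors with apex p bounded by consecutive rays from p through x_i and x_{i+1}. Then the diameter of each C_i, and hence the maximum relative diameter d_M(P_k, C) = max_i diam(C_i), equals max{R, 2·r·sin(π/k)}. -/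
open Metric Set

/-- Rotation of the plane (identified with `ℂ`) about the point `p` by angle `2π/k`. -/
noncomputable def planeRotation (k : ℕ) (p z : ℂ) : ℂ :=
  p + Complex.exp (2 * (Real.pi : ℂ) * Complex.I / (k : ℂ)) * (z - p)

/-- A `k`-rotationally symmetric planar convex body with center of symmetry `p`. -/
def IsRotSymConvexBody (k : ℕ) (p : ℂ) (C : Set ℂ) : Prop :=
  IsCompact C ∧ Convex ℝ C ∧ (interior C).Nonempty ∧ planeRotation k p '' C = C

/-- The inradius of a planar set. -/
noncomputable def inradius (C : Set ℂ) : ℝ :=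
  sSup {r : ℝ | ∃ c : ℂ, closedBall c r ⊆ C}

/-- The circumradius of a planar set. -/
noncomputable def circumradius (C : Set ℂ) : ℝ :=
  sInf {R : ℝ | ∃ c : ℂ, C ⊆ closedBall c R}

/-- The `i`-th closed angular sector of angle `2π/k` with apex `p`, bounded by the rays
from `p` through `ρ^[i] x₁` and `ρ^[i+1] x₁`, where `ρ` is the rotation about `p`
by angle `2π/k`: the points `p + t·e^{iθ}·(ρ^[i] x₁ − p)` with `t ≥ 0`, `0 ≤ θ ≤ 2π/k`. -/
noncomputable def standardSector (k : ℕ) (p x₁ : ℂ) (i : ℕ) : Set ℂ :=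
  {z : ℂ | ∃ t θ : ℝ, 0 ≤ t ∧ 0 ≤ θ ∧ θ ≤ 2 * Real.pi / k ∧
    z = p + (t : ℂ) * Complex.exp ((θ : ℂ) * Complex.I) * ((planeRotation k p)^[i] x₁ - p)}

/-!
Averaging over the rotations shows that a largest inscribed disc and a smallest enclosing disc
can both be centred at `p`; hence `C` lies in the disc of radius `R` about `p` and meets its
boundary, while the disc of radius `r` about `p` lies in `C` and touches `∂C` at `x₁` and at its
rotation `ρ x₁`. The tangents to that disc at `x₁` and `ρ x₁` support `C`, so the first piece lies
in the kite cut from the disc of radius `R` by the two tangents. Since the sector angle `2π/k` is at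
most `2π/3`, a computation in polar coordinates bounds the distance between two points of the
kite by `R` or by the chord `|x₁ - ρ x₁| = 2 r sin (π/k)`. Both values are attained: the piece
contains `p`, `x₁` and `ρ x₁`, and some piece contains a point of `C` at distance `R` from `p`.
All pieces are rotations of one another.
-/

open Real

noncomputable def rotationRoot (k : ℕ) : ℂ := Complex.exp (2 * π * Complex.I / k)

section Rotation

variable {k : ℕ} {p : ℂ} {C : Set ℂ}

theorem planeRotation_iterate_apply (k : ℕ) (p z : ℂ) (n : ℕ) :
    (planeRotation k p)^[n] z = p + rotationRoot k ^ n * (z - p) := by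
  induction n with
  | zero => simp
  | succ n ih =>
    rw [Function.iterate_succ_apply', ih, planeRotation, ← rotationRoot]
    ring

theorem planeRotation_apply_eq_exp (k : ℕ) (p z : ℂ) :
    planeRotation k p z = p + Complex.exp (↑(2 * π / k) * Complex.I) * (z - p) := by
  rw [planeRotation]
  push_cast
  ring_nf

theorem rotationRoot_pow (k n : ℕ) :
    rotationRoot k ^ n = Complex.exp (↑(n * (2 * π / k)) * Complex.I) := by
  rw [rotationRoot, ← Complex.exp_nat_mul]
  push_cast
  ring_nf

theorem norm_rotationRoot_pow (k n : ℕ) : ‖rotationRoot k ^ n‖ = 1 := by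
  rw [rotationRoot_pow, Complex.norm_exp_ofReal_mul_I]

theorem sum_rotationRoot_pow (hk : 2 ≤ k) : ∑ j ∈ Finset.range k, rotationRoot k ^ j = 0 :=
  (Complex.isPrimitiveRoot_exp k (by omega)).geom_sum_eq_zero (by omega)

theorem sum_planeRotation_iterate (hk : 2 ≤ k) (c : ℂ) :
    ∑ j ∈ Finset.range k, (planeRotation k p)^[j] c = k * p := by
  simp only [planeRotation_iterate_apply, Finset.sum_add_distrib, ← Finset.sum_mul,
    sum_rotationRoot_pow hk, Finset.sum_const, Finset.card_range, nsmul_eq_mul]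
  ring

theorem isometry_planeRotation_iterate (k : ℕ) (p : ℂ) (n : ℕ) :
    Isometry (planeRotation k p)^[n] := by
  refine Isometry.of_dist_eq fun z w => ?_
  simp only [planeRotation_iterate_apply, dist_eq_norm]
  rw [show p + rotationRoot k ^ n * (z - p) - (p + rotationRoot k ^ n * (w - p)) =
    rotationRoot k ^ n * (z - w) by ring, norm_mul, norm_rotationRoot_pow, one_mul]

theorem sin_pi_div_natCast_nonneg (k : ℕ) : 0 ≤ sin (π / k) := by
  rcases Nat.eq_zero_or_pos k with rfl | hk
  · simp
  · exact sin_nonneg_of_nonneg_of_le_pi (by positivity)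
      (div_le_self pi_pos.le (by exact_mod_cast hk))

theorem dist_planeRotation_self (k : ℕ) (p z : ℂ) :
    dist z (planeRotation k p z) = 2 * ‖z - p‖ * sin (π / k) := by
  have hsq : dist z (planeRotation k p z) ^ 2 = (2 * ‖z - p‖ * sin (π / k)) ^ 2 := by
    rw [dist_eq_norm, planeRotation_apply_eq_exp,
      show z - (p + Complex.exp (↑(2 * π / k) * Complex.I) * (z - p)) =
        (1 - Complex.exp (↑(2 * π / k) * Complex.I)) * (z - p) by ring,
      norm_mul, mul_pow, Complex.sq_norm, Complex.normSq_apply]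
    simp only [Complex.sub_re, Complex.sub_im, Complex.one_re, Complex.one_im,
      Complex.exp_ofReal_mul_I_re, Complex.exp_ofReal_mul_I_im]
    rw [show 2 * π / k = 2 * (π / k) by ring, cos_two_mul, sin_two_mul]
    linear_combination
      (4 * ‖z - p‖ ^ 2 * cos (π / k) ^ 2 - 4 * ‖z - p‖ ^ 2) * sin_sq_add_cos_sq (π / k)
  exact (sq_eq_sq₀ dist_nonneg (by have := sin_pi_div_natCast_nonneg k; positivity)).1 hsq

theorem image_planeRotation_iterate (h : planeRotation k p '' C = C) (n : ℕ) :
    (planeRotation k p)^[n] '' C = C := by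
  rw [image_iterate_eq, Function.iterate_fixed h]

theorem planeRotation_iterate_notMem_interior (hinv : planeRotation k p '' C = C) {x : ℂ}
    (hx : x ∉ interior C) (n : ℕ) : (planeRotation k p)^[n] x ∉ interior C := by
  have hiso := isometry_planeRotation_iterate k p n
  have hpre : (planeRotation k p)^[n] ⁻¹' C = C := by
    conv_lhs => rw [← image_planeRotation_iterate hinv n]
    exact hiso.injective.preimage_image C
  refine fun h => hx (interior_maximal ?_ (isOpen_interior.preimage hiso.continuous) h)
  exact (preimage_mono interior_subset).trans hpre.subset

theorem closedBall_subset_of_planeRotation_invariant (hk : 2 ≤ k) (hconv : Convex ℝ C)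
    (hinv : planeRotation k p '' C = C) {c : ℂ} {s : ℝ} (h : closedBall c s ⊆ C) :
    closedBall p s ⊆ C := by
  intro z hz
  have hk0 : (k : ℂ) ≠ 0 := by exact_mod_cast (by omega : k ≠ 0)
  have hmem : ∀ j ∈ Finset.range k, (planeRotation k p)^[j] c + (z - p) ∈ C := by
    intro j _
    have hy : c + (rotationRoot k ^ j)⁻¹ * (z - p) ∈ closedBall c s := by
      rwa [mem_closedBall, dist_eq_norm, add_sub_cancel_left, norm_mul, norm_inv,
        norm_rotationRoot_pow, inv_one, one_mul, ← dist_eq_norm]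
    have hζ : rotationRoot k ^ j ≠ 0 := by
      rw [← norm_ne_zero_iff, norm_rotationRoot_pow]
      exact one_ne_zero
    rw [← image_planeRotation_iterate hinv j]
    refine ⟨_, h hy, ?_⟩
    rw [planeRotation_iterate_apply, planeRotation_iterate_apply]
    field_simp
    ring
  have hz : z = ∑ j ∈ Finset.range k, (k : ℝ)⁻¹ • ((planeRotation k p)^[j] c + (z - p)) := by
    rw [← Finset.smul_sum, Finset.sum_add_distrib, sum_planeRotation_iterate hk,
      Finset.sum_const, Finset.card_range, Complex.real_smul, nsmul_eq_mul]
    push_cast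
    field_simp
    ring
  rw [hz]
  refine hconv.sum_mem (fun _ _ => by positivity) ?_ hmem
  rw [Finset.sum_const, Finset.card_range, nsmul_eq_mul]
  field_simp

theorem subset_closedBall_of_planeRotation_invariant (hk : 2 ≤ k)
    (hinv : planeRotation k p '' C = C) {c : ℂ} {s : ℝ} (h : C ⊆ closedBall c s) :
    C ⊆ closedBall p s := by
  intro z hz
  have hk0 : (0 : ℝ) < k := by exact_mod_cast (by omega : 0 < k)
  have hdist : ∀ j ∈ Finset.range k, ‖z - (planeRotation k p)^[j] c‖ ≤ s := by
    intro j _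
    rw [← image_planeRotation_iterate hinv j] at hz
    obtain ⟨y, hy, rfl⟩ := hz
    rw [← dist_eq_norm, (isometry_planeRotation_iterate k p j).dist_eq]
    exact h hy
  have hsum : (k : ℂ) * (z - p) = ∑ j ∈ Finset.range k, (z - (planeRotation k p)^[j] c) := by
    rw [Finset.sum_sub_distrib, sum_planeRotation_iterate hk, Finset.sum_const,
      Finset.card_range, nsmul_eq_mul]
    ring
  have : k * ‖z - p‖ ≤ k * s :=
    calc k * ‖z - p‖ = ‖(k : ℂ) * (z - p)‖ := by simp
      _ ≤ ∑ j ∈ Finset.range k, ‖z - (planeRotation k p)^[j] c‖ := hsum ▸ norm_sum_le _ _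
      _ ≤ k * s := by simpa using Finset.sum_le_sum hdist
  rw [mem_closedBall, dist_eq_norm]
  exact le_of_mul_le_mul_left this hk0

theorem IsRotSymConvexBody.inradius_pos_and_closedBall_subset (hC : IsRotSymConvexBody k p C)
    (hk : 2 ≤ k) : 0 < inradius C ∧ closedBall p (inradius C) ⊆ C := by
  obtain ⟨hcomp, hconv, ⟨c₀, hc₀⟩, hinv⟩ := hC
  obtain ⟨ε, hε, hεC⟩ := nhds_basis_closedBall.mem_iff.1 (mem_interior_iff_mem_nhds.1 hc₀)
  have hne : {r : ℝ | ∃ c : ℂ, closedBall c r ⊆ C}.Nonempty := ⟨ε, c₀, hεC⟩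
  have hbdd : BddAbove {r : ℝ | ∃ c : ℂ, closedBall c r ⊆ C} := by
    refine ⟨diam C, fun s ⟨c, hc⟩ => ?_⟩
    rcases le_or_gt s 0 with hs | hs
    · exact hs.trans diam_nonneg
    · have hcs : c + s ∈ closedBall c s := by simp [abs_of_pos hs]
      simpa [abs_of_pos hs] using
        dist_le_diam_of_mem hcomp.isBounded (hc hcs) (hc (mem_closedBall_self hs.le))
  have hpos : 0 < inradius C := hε.trans_le (le_csSup hbdd ⟨c₀, hεC⟩)
  have hball : ball p (inradius C) ⊆ C := by
    intro z hz
    obtain ⟨s, ⟨c, hc⟩, hs⟩ := exists_lt_of_lt_csSup hne (mem_ball.1 hz)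
    exact closedBall_subset_of_planeRotation_invariant hk hconv hinv hc (mem_closedBall.2 hs.le)
  refine ⟨hpos, ?_⟩
  rw [← closure_ball p hpos.ne']
  exact hcomp.isClosed.closure_subset_iff.2 hball

theorem exists_mem_dist_eq_circumradius (hk : 2 ≤ k) (hcomp : IsCompact C) (hne : C.Nonempty)
    (hinv : planeRotation k p '' C = C) :
    ∃ q ∈ C, dist q p = circumradius C ∧ C ⊆ closedBall p (circumradius C) := by
  obtain ⟨q, hqC, hqmax⟩ := hcomp.exists_isMaxOn hne
    (continuous_id.dist continuous_const).continuousOn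
  have hmem : dist q p ∈ {R : ℝ | ∃ c : ℂ, C ⊆ closedBall c R} := ⟨p, hqmax⟩
  have hR : circumradius C = dist q p := by
    refine le_antisymm (csInf_le ⟨0, fun R ⟨c, hc⟩ => dist_nonneg.trans (hc hqC)⟩ hmem) ?_
    exact le_csInf ⟨_, hmem⟩ fun R ⟨c, hc⟩ =>
      subset_closedBall_of_planeRotation_invariant hk hinv hc hqC
  exact ⟨q, hqC, hR.symm, hR ▸ hqmax⟩

end Rotation

/-- Otherwise `x` would lie on an open segment from an interior point of the ball to `z`. -/
theorem inner_sub_le_sq_of_notMem_interior {E : Type*} [NormedAddCommGroup E]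
    [InnerProductSpace ℝ E] {C : Set E} {p x z : E} {r : ℝ} (hconv : Convex ℝ C)
    (hball : ball p r ⊆ C) (hx : x ∉ interior C) (hxr : ‖x - p‖ = r) (hz : z ∈ C) :
    inner ℝ (z - p) (x - p) ≤ r ^ 2 := by
  by_contra! h
  set a := inner ℝ (z - p) (x - p)
  have hcs : a ≤ ‖z - p‖ * r := hxr ▸ real_inner_le_norm (z - p) (x - p)
  have hr : 0 ≤ r := hxr ▸ norm_nonneg _
  have hdr : r ^ 2 < ‖z - p‖ ^ 2 := by nlinarith [norm_nonneg (z - p)]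
  set t := (a - r ^ 2) / (‖z - p‖ ^ 2 - r ^ 2)
  have ht0 : 0 < t := div_pos (by linarith) (by linarith)
  have ht1 : t < 1 := (div_lt_one (by linarith)).2 (by nlinarith [norm_nonneg (z - p)])
  have htd : t * (‖z - p‖ ^ 2 - r ^ 2) = a - r ^ 2 := div_mul_cancel₀ _ (by linarith)
  have hnorm : ‖x - p - t • (z - p)‖ < (1 - t) * r := by
    refine lt_of_pow_lt_pow_left₀ 2 (by nlinarith) ?_
    rw [norm_sub_sq_real, norm_smul, inner_smul_right, real_inner_comm, hxr,
      Real.norm_of_nonneg ht0.le]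
    nlinarith
  set w := p + (1 - t)⁻¹ • (x - p - t • (z - p))
  have hw : w ∈ interior C := by
    refine interior_maximal hball isOpen_ball ?_
    rw [mem_ball, dist_eq_norm, add_sub_cancel_left, norm_smul, norm_inv,
      Real.norm_of_nonneg (by linarith), inv_mul_lt_iff₀ (by linarith)]
    exact hnorm
  have hxw : (1 - t) • w + t • z = x := by
    rw [smul_add, smul_smul, mul_inv_cancel₀ (by linarith), one_smul]
    simp only [smul_sub, sub_smul, one_smul]
    abel
  exact hx (hxw ▸ hconv.combo_interior_self_mem_interior hw hz (by linarith) ht0.le (by ring))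

section Trigonometry

theorem sin_le_two_mul_sin_mul_cos {β σ : ℝ} (hσ : 0 ≤ σ) (h2σ : 2 * σ ≤ β) (hβσ : β + σ ≤ π) :
    sin σ ≤ 2 * sin β * cos σ := by
  have hsum : 0 ≤ sin (β + σ) := sin_nonneg_of_nonneg_of_le_pi (by linarith) hβσ
  have hdiff : 0 ≤ sin (β - σ) - sin σ := by
    rw [sin_sub_sin]
    have : 0 ≤ sin ((β - σ - σ) / 2) := sin_nonneg_of_nonneg_of_le_pi (by linarith) (by linarith)
    have : 0 ≤ cos ((β - σ + σ) / 2) := cos_nonneg_of_mem_Icc ⟨by linarith, by linarith⟩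
    positivity
  rw [two_mul_sin_mul_cos]
  linarith

/-- `A` and `B` are the distances from the origin of the points at angles `a` and `β - b` on the
tangents to the circle of radius `r` at the angles `0` and `β`; the right-hand side is the squared
chord between the two points of tangency. -/
theorem sq_add_sq_sub_mul_cos_le_of_mul_cos_eq {β r A B a b : ℝ} (hβ : β ≤ 2 * π / 3)
    (ha : 0 ≤ a) (hb : 0 ≤ b) (hab : a + b ≤ β - π / 3) (hA : A * cos a = r)
    (hB : B * cos b = r) :
    A ^ 2 + B ^ 2 - 2 * A * B * cos (β - (a + b)) ≤ 2 * r ^ 2 * (1 - cos β) := by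
  have hca : 0 < cos a := cos_pos_of_mem_Ioo ⟨by linarith [pi_pos], by linarith [pi_pos]⟩
  have hcb : 0 < cos b := cos_pos_of_mem_Ioo ⟨by linarith [pi_pos], by linarith [pi_pos]⟩
  have hsa : 0 ≤ sin a := sin_nonneg_of_nonneg_of_le_pi ha (by linarith [pi_pos])
  have hsb : 0 ≤ sin b := sin_nonneg_of_nonneg_of_le_pi hb (by linarith [pi_pos])
  have hsσ : 0 ≤ sin (a + b) := sin_nonneg_of_nonneg_of_le_pi (by linarith) (by linarith)
  have hkey : sin (a + b) ≤ 2 * sin β * (cos a * cos b) := by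
    have hcσ : cos (a + b) ≤ cos a * cos b := by
      rw [cos_add]
      nlinarith [mul_nonneg hsa hsb]
    have hsβ : 0 ≤ sin β := sin_nonneg_of_nonneg_of_le_pi (by linarith) (by linarith [pi_pos])
    have := sin_le_two_mul_sin_mul_cos (β := β) (σ := a + b) (by linarith) (by linarith [pi_pos])
      (by linarith [pi_pos])
    nlinarith
  have hscaled : (2 * r ^ 2 * (1 - cos β) - (A ^ 2 + B ^ 2 - 2 * A * B * cos (β - (a + b)))) *
      (cos a * cos b) ^ 2 = r ^ 2 * (sin (a + b) * (2 * sin β * (cos a * cos b) - sin (a + b)) +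
        2 * (cos a * cos b) * (sin a * sin b) * (1 - cos β)) := by
    rw [cos_sub, cos_add, sin_add]
    set c := cos β * (cos a * cos b - sin a * sin b) + sin β * (sin a * cos b + cos a * sin b)
    linear_combination (-cos b ^ 2 * (A * cos a + r) + 2 * cos a * cos b * c * B * cos b) * hA +
      (-cos a ^ 2 * (B * cos b + r) + 2 * cos a * cos b * c * r) * hB +
      r ^ 2 * cos b ^ 2 * sin_sq_add_cos_sq a + r ^ 2 * cos a ^ 2 * sin_sq_add_cos_sq b
  have : 0 ≤ (2 * r ^ 2 * (1 - cos β) - (A ^ 2 + B ^ 2 - 2 * A * B * cos (β - (a + b)))) *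
      (cos a * cos b) ^ 2 := by
    rw [hscaled]
    have := cos_le_one β
    have := mul_nonneg hsσ (sub_nonneg.2 hkey)
    positivity
  nlinarith [pow_pos (mul_pos hca hcb) 2]

theorem exists_mem_Icc_mul_cos_eq {r A a : ℝ} (ha : 0 ≤ a) (hrA : r ≤ A) (hAa : A * cos a ≤ r) :
    ∃ a' ∈ Icc 0 a, A * cos a' = r :=
  intermediate_value_Icc' ha (f := fun x => A * cos x) (by fun_prop) ⟨hAa, by simpa using hrA⟩

/-- Moving each point along its circle until it meets its tangent line moves the points apart. -/
theorem sq_add_sq_sub_mul_cos_le_of_mul_cos_le {β r A B a b : ℝ} (hr : 0 ≤ r)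
    (hβ : β ≤ 2 * π / 3) (ha : 0 ≤ a) (hb : 0 ≤ b) (hab : π / 3 ≤ β - a - b) (hrA : r ≤ A)
    (hrB : r ≤ B) (hAa : A * cos a ≤ r) (hBb : B * cos b ≤ r) :
    A ^ 2 + B ^ 2 - 2 * A * B * cos (β - a - b) ≤ 2 * r ^ 2 * (1 - cos β) := by
  obtain ⟨a', ⟨ha', ha'a⟩, hA⟩ := exists_mem_Icc_mul_cos_eq ha hrA hAa
  obtain ⟨b', ⟨hb', hb'b⟩, hB⟩ := exists_mem_Icc_mul_cos_eq hb hrB hBb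
  have hcos : cos (β - (a' + b')) ≤ cos (β - a - b) :=
    cos_le_cos_of_nonneg_of_le_pi (by linarith [pi_pos]) (by linarith [pi_pos]) (by linarith)
  have := sq_add_sq_sub_mul_cos_le_of_mul_cos_eq hβ ha' hb' (by linarith) hA hB
  nlinarith [mul_nonneg (hr.trans hrA) (hr.trans hrB)]

theorem sq_add_sq_sub_mul_le_max {s t A c : ℝ} (hs : 0 ≤ s) (hsA : s ≤ A) :
    s ^ 2 + t ^ 2 - 2 * s * t * c ≤ max (t ^ 2) (A ^ 2 + t ^ 2 - 2 * A * t * c) := by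
  rcases le_total s (t * c) with h | h
  · exact le_max_of_le_left (by nlinarith)
  · exact le_max_of_le_right (by nlinarith)

/-- The squared distance is convex in each radius, so both points may be pushed out to
radius at least `r`. -/
theorem sq_add_sq_sub_mul_cos_le_max_of_pi_div_three_le {β r R a b s₁ s₂ : ℝ} (hr : 0 ≤ r)
    (hrR : r ≤ R) (hβ : β ≤ 2 * π / 3) (ha : 0 ≤ a) (hb : 0 ≤ b) (hab : π / 3 ≤ β - a - b)
    (hs₁ : s₁ ∈ Icc 0 R) (hs₂ : s₂ ∈ Icc 0 R) (h₁ : s₁ * cos a ≤ r) (h₂ : s₂ * cos b ≤ r) :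
    s₁ ^ 2 + s₂ ^ 2 - 2 * s₁ * s₂ * cos (β - a - b) ≤ max (R ^ 2) (2 * r ^ 2 * (1 - cos β)) := by
  set c := cos (β - a - b)
  set A := max s₁ r
  set B := max s₂ r
  have hAa : A * cos a ≤ r := max_rec' (· * cos a ≤ r) h₁ (by nlinarith [cos_le_one a])
  have hBb : B * cos b ≤ r := max_rec' (· * cos b ≤ r) h₂ (by nlinarith [cos_le_one b])
  have hfar := sq_add_sq_sub_mul_cos_le_of_mul_cos_le hr hβ ha hb hab (le_max_right s₁ r)
    (le_max_right s₂ r) hAa hBb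
  have hA : A ^ 2 ≤ R ^ 2 := pow_le_pow_left₀ (hr.trans (le_max_right _ _)) (max_le hs₁.2 hrR) 2
  have hs₂R : s₂ ^ 2 ≤ R ^ 2 := pow_le_pow_left₀ hs₂.1 hs₂.2 2
  calc s₁ ^ 2 + s₂ ^ 2 - 2 * s₁ * s₂ * c ≤ max (s₂ ^ 2) (A ^ 2 + s₂ ^ 2 - 2 * A * s₂ * c) :=
        sq_add_sq_sub_mul_le_max hs₁.1 (le_max_left _ _)
    _ ≤ max (R ^ 2) (2 * r ^ 2 * (1 - cos β)) := by
      refine max_le (le_max_of_le_left hs₂R) ?_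
      have := sq_add_sq_sub_mul_le_max (t := A) (c := c) hs₂.1 (le_max_left s₂ r)
      rcases le_max_iff.1 this with h | h
      · exact le_max_of_le_left (by linarith)
      · exact le_max_of_le_right (by linarith)

/-- `(s₁, θ₁)` and `(s₂, θ₂)` are polar coordinates of two points of the kite cut from the disc
of radius `R` by the tangents to the circle of radius `r` at the angles `0` and `β`. -/
theorem sq_add_sq_sub_mul_cos_le_max {β r R s₁ s₂ θ₁ θ₂ : ℝ} (hr : 0 ≤ r) (hrR : r ≤ R)
    (hβ : β ≤ 2 * π / 3) (hθ₁ : θ₁ ∈ Icc 0 β) (hθ₂ : θ₂ ∈ Icc 0 β) (hs₁ : s₁ ∈ Icc 0 R)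
    (hs₂ : s₂ ∈ Icc 0 R) (h₁ : s₁ * cos θ₁ ≤ r) (h₁' : s₁ * cos (β - θ₁) ≤ r)
    (h₂ : s₂ * cos θ₂ ≤ r) (h₂' : s₂ * cos (β - θ₂) ≤ r) :
    s₁ ^ 2 + s₂ ^ 2 - 2 * s₁ * s₂ * cos (θ₁ - θ₂) ≤ max (R ^ 2) (2 * r ^ 2 * (1 - cos β)) := by
  wlog hθ : θ₁ ≤ θ₂ generalizing s₁ s₂ θ₁ θ₂
  · have := this hθ₂ hθ₁ hs₂ hs₁ h₂ h₂' h₁ h₁' (by linarith)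
    rw [← cos_neg, neg_sub]
    linarith
  rw [← cos_neg, neg_sub]
  rcases le_total (θ₂ - θ₁) (π / 3) with hnear | hfar
  · have hc : 1 / 2 ≤ cos (θ₂ - θ₁) := by
      rw [← cos_pi_div_three]
      exact cos_le_cos_of_nonneg_of_le_pi (by linarith) (by linarith [pi_pos]) hnear
    refine le_max_of_le_left ?_
    nlinarith [hs₁.1, hs₁.2, hs₂.1, hs₂.2, mul_nonneg hs₁.1 hs₂.1]
  · have := sq_add_sq_sub_mul_cos_le_max_of_pi_div_three_le hr hrR hβ hθ₁.1
      (sub_nonneg.2 hθ₂.2) (by linarith) hs₁ hs₂ h₁ h₂'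
    rwa [show β - θ₁ - (β - θ₂) = θ₂ - θ₁ by ring] at this

end Trigonometry

theorem inner_ofReal_mul_exp_mul (a b θ φ : ℝ) (u : ℂ) :
    inner ℝ (↑a * Complex.exp (↑θ * Complex.I) * u) (↑b * Complex.exp (↑φ * Complex.I) * u) =
      a * b * ‖u‖ ^ 2 * cos (θ - φ) := by
  rw [Complex.inner, Complex.sq_norm, Complex.normSq_apply, cos_sub]
  simp [Complex.mul_re, Complex.mul_im, Complex.exp_ofReal_mul_I_re,
    Complex.exp_ofReal_mul_I_im]
  ring

theorem sq_dist_ofReal_mul_exp_mul (p u : ℂ) (t₁ t₂ θ₁ θ₂ : ℝ) :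
    dist (p + ↑t₁ * Complex.exp (↑θ₁ * Complex.I) * u)
      (p + ↑t₂ * Complex.exp (↑θ₂ * Complex.I) * u) ^ 2 =
      (t₁ * ‖u‖) ^ 2 + (t₂ * ‖u‖) ^ 2 - 2 * (t₁ * ‖u‖) * (t₂ * ‖u‖) * cos (θ₁ - θ₂) := by
  rw [dist_eq_norm, add_sub_add_left_eq_sub, norm_sub_sq_real, ← real_inner_self_eq_norm_sq,
    ← real_inner_self_eq_norm_sq, inner_ofReal_mul_exp_mul, inner_ofReal_mul_exp_mul,
    inner_ofReal_mul_exp_mul]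
  simp only [sub_self, cos_zero]
  ring

section Sector

variable {k : ℕ} {p x₁ y z : ℂ} {C : Set ℂ} {r R : ℝ}

theorem center_mem_standardSector (k : ℕ) (p x₁ : ℂ) (i : ℕ) : p ∈ standardSector k p x₁ i :=
  ⟨0, 0, le_rfl, le_rfl, by positivity, by simp⟩

theorem self_mem_standardSector_zero (k : ℕ) (p x₁ : ℂ) : x₁ ∈ standardSector k p x₁ 0 :=
  ⟨1, 0, zero_le_one, le_rfl, by positivity, by simp⟩

theorem planeRotation_mem_standardSector_zero (k : ℕ) (p x₁ : ℂ) :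
    planeRotation k p x₁ ∈ standardSector k p x₁ 0 :=
  ⟨1, 2 * π / k, zero_le_one, by positivity, le_rfl, by simp [planeRotation_apply_eq_exp]⟩

theorem standardSector_eq_image (k : ℕ) (p x₁ : ℂ) (i : ℕ) :
    standardSector k p x₁ i = (planeRotation k p)^[i] '' standardSector k p x₁ 0 := by
  ext z
  simp only [standardSector, Function.iterate_zero_apply, mem_image, mem_ofPred_eq,
    planeRotation_iterate_apply]
  constructor
  · rintro ⟨t, θ, ht, hθ, hθβ, rfl⟩
    exact ⟨_, ⟨t, θ, ht, hθ, hθβ, rfl⟩, by ring⟩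
  · rintro ⟨_, ⟨t, θ, ht, hθ, hθβ, rfl⟩, rfl⟩
    exact ⟨t, θ, ht, hθ, hθβ, by ring⟩

theorem diam_inter_standardSector (hinv : planeRotation k p '' C = C) (i : ℕ) :
    diam (C ∩ standardSector k p x₁ i) = diam (C ∩ standardSector k p x₁ 0) := by
  have hiso := isometry_planeRotation_iterate k p i
  rw [standardSector_eq_image, ← image_planeRotation_iterate hinv i, ← image_inter hiso.injective,
    image_planeRotation_iterate hinv i, hiso.diam_image]

theorem exists_mem_standardSector (hk : 0 < k) (hx₁ : x₁ ≠ p) (z : ℂ) :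
    ∃ i, z ∈ standardSector k p x₁ i := by
  have hβ : 0 < 2 * π / k := by positivity
  set w := (z - p) / (x₁ - p)
  set φ := Complex.arg w + 2 * π
  have hφ : 0 ≤ φ := by linarith [Complex.neg_pi_lt_arg w, pi_pos]
  set n := ⌊φ / (2 * π / k)⌋₊
  have hn : n * (2 * π / k) ≤ φ := (le_div_iff₀ hβ).1 (Nat.floor_le (div_nonneg hφ hβ.le))
  have hn' : φ < (n + 1) * (2 * π / k) := (div_lt_iff₀ hβ).1 (Nat.lt_floor_add_one _)
  refine ⟨n, ‖w‖, φ - n * (2 * π / k), norm_nonneg w, by linarith, by linarith, ?_⟩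
  have hexp : Complex.exp (↑(φ - n * (2 * π / k)) * Complex.I) * rotationRoot k ^ n =
      Complex.exp (Complex.arg w * Complex.I) := by
    rw [rotationRoot_pow, ← Complex.exp_add, ← Complex.exp_periodic (_ * Complex.I)]
    simp only [φ]
    push_cast
    ring_nf
  rw [planeRotation_iterate_apply, add_sub_cancel_left, ← mul_assoc, mul_assoc (‖w‖ : ℂ), hexp,
    Complex.norm_mul_exp_arg_mul_I, div_mul_cancel₀ _ (sub_ne_zero.2 hx₁)]
  ring

theorem exists_polar_of_mem_inter_standardSector_zero (hconv : Convex ℝ C)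
    (hinv : planeRotation k p '' C = C) (hr : 0 < r) (hball : ball p r ⊆ C)
    (hR : C ⊆ closedBall p R) (hx₁ : x₁ ∉ interior C) (hx₁r : ‖x₁ - p‖ = r)
    (hy : y ∈ C ∩ standardSector k p x₁ 0) :
    ∃ t θ : ℝ, 0 ≤ t ∧ θ ∈ Icc 0 (2 * π / k) ∧
      y = p + ↑t * Complex.exp (↑θ * Complex.I) * (x₁ - p) ∧
      t * r ≤ R ∧ t * r * cos θ ≤ r ∧ t * r * cos (2 * π / k - θ) ≤ r := by
  obtain ⟨hyC, t, θ, ht, hθ, hθβ, rfl⟩ := hy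
  simp only [Function.iterate_zero_apply] at hyC ⊢
  have hx₂ : (planeRotation k p)^[1] x₁ - p =
      ↑(1 : ℝ) * Complex.exp (↑(2 * π / k) * Complex.I) * (x₁ - p) := by
    rw [Function.iterate_one, planeRotation_apply_eq_exp, add_sub_cancel_left, Complex.ofReal_one,
      one_mul]
  have hx₂r : ‖(planeRotation k p)^[1] x₁ - p‖ = r := by
    rw [hx₂, norm_mul, norm_mul, Complex.norm_exp_ofReal_mul_I, hx₁r]
    simp
  have h₁ := inner_sub_le_sq_of_notMem_interior hconv hball hx₁ hx₁r hyC
  have h₂ := inner_sub_le_sq_of_notMem_interior hconv hball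
    (planeRotation_iterate_notMem_interior hinv hx₁ 1) hx₂r hyC
  have hinner := inner_ofReal_mul_exp_mul t 1 θ 0 (x₁ - p)
  simp only [Complex.ofReal_one, Complex.ofReal_zero, zero_mul, Complex.exp_zero, one_mul,
    mul_one, sub_zero] at hinner
  rw [add_sub_cancel_left, hinner, hx₁r] at h₁
  rw [add_sub_cancel_left, hx₂, inner_ofReal_mul_exp_mul, hx₁r] at h₂
  refine ⟨t, θ, ht, ⟨hθ, hθβ⟩, rfl, ?_, by nlinarith, ?_⟩
  · have := mem_closedBall.1 (hR hyC)
    rwa [dist_eq_norm, add_sub_cancel_left, norm_mul, norm_mul, Complex.norm_exp_ofReal_mul_I,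
      hx₁r, Complex.norm_real, Real.norm_of_nonneg ht, mul_one] at this
  · rw [← cos_neg, neg_sub]
    nlinarith

theorem dist_le_of_mem_inter_standardSector_zero (hk : 3 ≤ k) (hconv : Convex ℝ C)
    (hinv : planeRotation k p '' C = C) (hr : 0 < r) (hrR : r ≤ R) (hball : ball p r ⊆ C)
    (hR : C ⊆ closedBall p R) (hx₁ : x₁ ∉ interior C) (hx₁r : ‖x₁ - p‖ = r)
    (hy : y ∈ C ∩ standardSector k p x₁ 0) (hz : z ∈ C ∩ standardSector k p x₁ 0) :
    dist y z ≤ max R (2 * r * sin (π / k)) := by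
  obtain ⟨t₁, θ₁, ht₁, hθ₁, rfl, hR₁, h₁, h₁'⟩ :=
    exists_polar_of_mem_inter_standardSector_zero hconv hinv hr hball hR hx₁ hx₁r hy
  obtain ⟨t₂, θ₂, ht₂, hθ₂, rfl, hR₂, h₂, h₂'⟩ :=
    exists_polar_of_mem_inter_standardSector_zero hconv hinv hr hball hR hx₁ hx₁r hz
  have hβ : 2 * π / k ≤ 2 * π / 3 := by gcongr; exact_mod_cast hk
  have hsq := sq_add_sq_sub_mul_cos_le_max hr.le hrR hβ hθ₁ hθ₂
    ⟨by positivity, hR₁⟩ ⟨by positivity, hR₂⟩ h₁ h₁' h₂ h₂'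
  have hchord : 2 * r ^ 2 * (1 - cos (2 * π / k)) = (2 * r * sin (π / k)) ^ 2 := by
    rw [show 2 * π / k = 2 * (π / k) by ring, cos_two_mul]
    linear_combination 4 * r ^ 2 * (sin_sq_add_cos_sq (π / k)).symm
  rw [← hx₁r, ← sq_dist_ofReal_mul_exp_mul, hx₁r, hchord] at hsq
  rcases le_max_iff.1 hsq with h | h
  · exact le_max_of_le_left ((sq_le_sq₀ dist_nonneg (hr.le.trans hrR)).1 h)
  · have := sin_pi_div_natCast_nonneg k
    exact le_max_of_le_right ((sq_le_sq₀ dist_nonneg (by positivity)).1 h)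

end Sector

/-- The subsets of the standard `k`-partition of a `k`-rotationally symmetric planar
convex body (the intersections of `C` with the `k` closed angular sectors with apex `p`
determined by the `k`-symmetric images of a boundary point `x₁` closest to `p`)
all have diameter equal to `max {R, 2 r sin(π/k)}`; in particular this is the value of
the maximum relative diameter of the standard `k`-partition. -/
theorem diam_standardPartition_piece
    (k : ℕ) (hk : 3 ≤ k) (p : ℂ) (C : Set ℂ) (hC : IsRotSymConvexBody k p C)
    (x₁ : ℂ) (hx₁ : x₁ ∈ frontier C) (hx₁dist : dist p x₁ = inradius C) :
    ∀ i < k, Metric.diam (C ∩ standardSector k p x₁ i) =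
      max (circumradius C) (2 * inradius C * Real.sin (Real.pi / k)) := by
  intro i _
  obtain ⟨hr, hball⟩ := hC.inradius_pos_and_closedBall_subset (by omega)
  obtain ⟨hcomp, hconv, -, hinv⟩ := hC
  have hpC : p ∈ C := hball (mem_closedBall_self hr.le)
  obtain ⟨q, hqC, hqR, hCR⟩ := exists_mem_dist_eq_circumradius (by omega) hcomp ⟨p, hpC⟩ hinv
  have hx₁C : x₁ ∈ C := hcomp.isClosed.frontier_subset hx₁
  have hx₁r : ‖x₁ - p‖ = inradius C := by rw [← dist_eq_norm, dist_comm, hx₁dist]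
  have hrR : inradius C ≤ circumradius C := hx₁r ▸ dist_eq_norm x₁ p ▸ hCR hx₁C
  have hbdd (j : ℕ) : Bornology.IsBounded (C ∩ standardSector k p x₁ j) :=
    hcomp.isBounded.subset inter_subset_left
  rw [diam_inter_standardSector hinv]
  refine le_antisymm (diam_le_of_forall_dist_le (hr.le.trans (hrR.trans (le_max_left _ _)))
    fun y hy z hz => dist_le_of_mem_inter_standardSector_zero hk hconv hinv hr hrR
      (ball_subset_closedBall.trans hball) hCR hx₁.2 hx₁r hy hz) (max_le ?_ ?_)
  · have hx₁p : x₁ ≠ p := by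
      rintro rfl
      simp only [sub_self, norm_zero] at hx₁r
      linarith
    obtain ⟨j, hj⟩ := exists_mem_standardSector (k := k) (by omega) hx₁p q
    rw [← diam_inter_standardSector hinv j, ← hqR]
    exact dist_le_diam_of_mem (hbdd j) ⟨hqC, hj⟩ ⟨hpC, center_mem_standardSector k p x₁ j⟩
  · rw [← hx₁r, ← dist_planeRotation_self]
    exact dist_le_diam_of_mem (hbdd 0) ⟨hx₁C, self_mem_standardSector_zero k p x₁⟩
      ⟨hinv ▸ mem_image_of_mem _ hx₁C, planeRotation_mem_standardSector_zero k p x₁⟩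
end

section
/- Let k ≥ 3 be an integer, let C be a k-rotationally symmetric planar convex body with circumradius R, and let P be a k-partition of C, i.e. connected subsets C₁, …, C_k of C whose union is C, whose interiors are pairwise disjoint, and which all contain a common point c lying in the interior of C. Then the maximum relative diameter satisfies d_M(P) = max_{1≤i≤k} diam(C_i) ≥ R. -/
/-!
Let `x` be a point of `C` farthest from the center `p`, so that `C` lies in the closed ball of
radius `r = |x - p|` about `p` and `R(C) ≤ r`. The `k`-th roots of unity sum to zero, so the
inner products of `c - p` with the rotated vectors `ω^m (x - p)`, `ω = e^{2πi/k}`, sum to zero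
and one of them is nonpositive; the corresponding rotated copy of `x` lies in `C` and at
distance at least `r` from `c`. It belongs to some piece, which also contains `c`, so that piece
has diameter at least `r`.
-/

open Metric Set

/-- A `k`-subdivision of `C`: `k` connected subsets of `C` covering `C`,
with pairwise disjoint interiors. -/
def IsSubdivision (C : Set ℂ) (k : ℕ) (P : Fin k → Set ℂ) : Prop :=
  (∀ i, P i ⊆ C) ∧ (∀ i, IsConnected (P i)) ∧ (⋃ i, P i) = C ∧
    ∀ i j, i ≠ j → interior (P i) ∩ interior (P j) = ∅

/-- A `k`-partition of `C`: a `k`-subdivision all of whose pieces share a common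
point `c` lying in the interior of `C`. -/
def IsPartition (C : Set ℂ) (k : ℕ) (P : Fin k → Set ℂ) (c : ℂ) : Prop :=
  IsSubdivision C k P ∧ c ∈ interior C ∧ ∀ i, c ∈ P i

open scoped RealInnerProductSpace

theorem norm_le_norm_sub_of_inner_nonpos {E : Type*} [NormedAddCommGroup E]
    [InnerProductSpace ℝ E] {u w : E} (h : ⟪w, u⟫ ≤ 0) : ‖u‖ ≤ ‖w - u‖ := by
  have hsq : ‖u‖ ^ 2 ≤ ‖w - u‖ ^ 2 := by
    rw [norm_sub_sq_real]
    nlinarith [sq_nonneg ‖w‖]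
  exact pow_le_pow_iff_left₀ (norm_nonneg _) (norm_nonneg _) two_ne_zero |>.mp hsq

theorem IsPrimitiveRoot.exists_inner_pow_mul_nonpos {ζ : ℂ} {k : ℕ} (hζ : IsPrimitiveRoot ζ k)
    (hk : 1 < k) (v w : ℂ) : ∃ m < k, ⟪w, ζ ^ m * v⟫ ≤ 0 := by
  have hsum : ∑ m ∈ Finset.range k, ⟪w, ζ ^ m * v⟫ = ∑ m ∈ Finset.range k, (0 : ℝ) := by
    rw [← inner_sum, ← Finset.sum_mul, hζ.geom_sum_eq_zero hk, zero_mul, inner_zero_right,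
      Finset.sum_const_zero]
  obtain ⟨m, hm, hle⟩ :=
    Finset.exists_le_of_sum_le (Finset.nonempty_range_iff.mpr (by omega)) hsum.le
  exact ⟨m, Finset.mem_range.mp hm, hle⟩

theorem IsPrimitiveRoot.exists_norm_le_norm_sub_pow_mul {ζ : ℂ} {k : ℕ}
    (hζ : IsPrimitiveRoot ζ k) (hk : 1 < k) (v w : ℂ) : ∃ m < k, ‖v‖ ≤ ‖w - ζ ^ m * v‖ := by
  obtain ⟨m, hmk, hm⟩ := hζ.exists_inner_pow_mul_nonpos hk v w
  refine ⟨m, hmk, ?_⟩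
  calc ‖v‖ = ‖ζ ^ m * v‖ := by
        rw [norm_mul, norm_pow, hζ.norm'_eq_one (by omega), one_pow, one_mul]
    _ ≤ ‖w - ζ ^ m * v‖ := norm_le_norm_sub_of_inner_nonpos hm

theorem planeRotation_iterate (k : ℕ) (p z : ℂ) (m : ℕ) :
    (planeRotation k p)^[m] z =
      p + Complex.exp (2 * (Real.pi : ℂ) * Complex.I / (k : ℂ)) ^ m * (z - p) := by
  induction m with
  | zero => simp
  | succ m ih => rw [Function.iterate_succ_apply', ih, planeRotation]; ring

theorem exists_dist_le_dist_iterate_planeRotation {k : ℕ} (hk : 1 < k) (p z c : ℂ) :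
    ∃ m, dist z p ≤ dist c ((planeRotation k p)^[m] z) := by
  obtain ⟨m, -, hm⟩ := (Complex.isPrimitiveRoot_exp k (by omega)).exists_norm_le_norm_sub_pow_mul
    hk (z - p) (c - p)
  refine ⟨m, ?_⟩
  rwa [planeRotation_iterate, dist_eq_norm, dist_eq_norm, sub_add_eq_sub_sub]

theorem circumradius_le_of_subset_closedBall {C : Set ℂ} (hC : C.Nonempty) {q : ℂ} {r : ℝ}
    (h : C ⊆ closedBall q r) : circumradius C ≤ r := by
  obtain ⟨z, hz⟩ := hC
  refine csInf_le ⟨0, ?_⟩ ⟨q, h⟩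
  rintro s ⟨q', hs⟩
  exact dist_nonneg.trans (mem_closedBall.mp (hs hz))

/-- For any `k`-partition (`k ≥ 3`) of a `k`-rotationally symmetric planar convex
body, the maximum relative diameter is at least the circumradius. -/
theorem circumradius_le_maxRelDiam_partition
    (k : ℕ) (hk : 3 ≤ k) (p : ℂ) (C : Set ℂ) (hC : IsRotSymConvexBody k p C)
    (P : Fin k → Set ℂ) (c : ℂ) (hP : IsPartition C k P c) :
    circumradius C ≤ ⨆ i, Metric.diam (P i) := by
  obtain ⟨hcomp, -, hint, hrot⟩ := hC
  obtain ⟨⟨hsub, -, hcover, -⟩, -, hcP⟩ := hP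
  obtain ⟨x, hxC, hxmax⟩ := hcomp.exists_isMaxOn (hint.mono interior_subset)
    (continuous_id.dist continuous_const).continuousOn
  obtain ⟨m, hfar⟩ := exists_dist_le_dist_iterate_planeRotation (k := k) (by omega) p x c
  have hmaps : MapsTo (planeRotation k p) C C := (mapsTo_image _ C).mono_right hrot.subset
  obtain ⟨i, hi⟩ := mem_iUnion.mp (hcover ▸ hmaps.iterate m hxC)
  calc circumradius C ≤ dist x p :=
        circumradius_le_of_subset_closedBall ⟨x, hxC⟩ fun z hz ↦ mem_closedBall.mpr (hxmax hz)
    _ ≤ dist c ((planeRotation k p)^[m] x) := hfar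
    _ ≤ diam (P i) := dist_le_diam_of_mem (hcomp.isBounded.subset (hsub i)) (hcP i) hi
    _ ≤ ⨆ j, diam (P j) := le_ciSup (f := fun j ↦ diam (P j)) (Finite.bddAbove_range _) i
end

section
/- Let k ≥ 3 be an integer, let C be a k-rotationally symmetric planar convex body with inradius r, and let S be a k-subdivision of C, i.e. connected subsets C₁, …, C_k of C whose union is C and whose interiors are pairwise disjoint. Then the maximum relative diameter satisfies d_M(S) = max_{1≤i≤k} diam(C_i) ≥ 2·r·sin(π/k). -/
open Metric Set

/-!
Only the circle of a largest inscribed disk matters. Place `N = k m + 1` equally spaced points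
on a circle of radius `r` inside `C` and colour each by a piece containing it. If every piece had
diameter below `2 r sin (π / k)`, then for `m` large any two points of one colour would be fewer
than `m` steps apart along the circle; as `3 (m - 1) < N`, such a colour class lies in a run of
`m` consecutive points, so the `k` classes would cover at most `k m < N` points.
-/

open Real Filter Topology

theorem Int.card_le_of_forall_abs_sub_le {T : Finset ℤ} {d : ℕ}
    (h : ∀ x ∈ T, ∀ y ∈ T, |x - y| ≤ d) : T.card ≤ d + 1 := by
  rcases T.eq_empty_or_nonempty with rfl | hT
  · simp
  have hsub : T ⊆ Finset.Icc (T.min' hT) (T.min' hT + d) := fun x hx =>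
    Finset.mem_Icc.2 ⟨T.min'_le x hx,
      by linarith [le_abs_self (x - T.min' hT), h x hx _ (T.min'_mem hT)]⟩
  calc T.card ≤ (Finset.Icc (T.min' hT) (T.min' hT + d)).card := Finset.card_le_card hsub
    _ = d + 1 := by rw [Int.card_Icc]; omega

namespace ZMod

theorem card_le_of_forall_abs_valMinAbs_sub_le {N d : ℕ} (hd : 3 * d < N) {J : Finset (ZMod N)}
    (hJ : ∀ a ∈ J, ∀ b ∈ J, |(a - b).valMinAbs| ≤ d) : J.card ≤ d + 1 := by
  rcases J.eq_empty_or_nonempty with rfl | ⟨a₀, ha₀⟩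
  · simp
  have hinj : Set.InjOn (fun b => (b - a₀).valMinAbs) J := fun b _ b' _ h =>
    sub_left_injective (injective_valMinAbs h)
  rw [← Finset.card_image_of_injOn hinj]
  refine Int.card_le_of_forall_abs_sub_le ?_
  simp only [Finset.mem_image]
  rintro _ ⟨b, hb, rfl⟩ _ ⟨b', hb', rfl⟩
  -- both sides are congruent mod `N` and at most `3d < N` apart
  have hdvd :
      (N : ℤ) ∣ (b - b').valMinAbs - ((b - a₀).valMinAbs - (b' - a₀).valMinAbs) := by
    rw [← intCast_zmod_eq_zero_iff_dvd, Int.cast_sub, Int.cast_sub, coe_valMinAbs,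
      coe_valMinAbs, coe_valMinAbs, sub_sub_sub_cancel_right, sub_self]
  have h₁ := hJ b hb a₀ ha₀
  have h₂ := hJ b' hb' a₀ ha₀
  have h₃ := hJ b hb b' hb'
  have hsmall : |(b - b').valMinAbs - ((b - a₀).valMinAbs - (b' - a₀).valMinAbs)| < N := by
    have := abs_sub ((b - b').valMinAbs) ((b - a₀).valMinAbs - (b' - a₀).valMinAbs)
    have := abs_sub ((b - a₀).valMinAbs) ((b' - a₀).valMinAbs)
    omega
  rwa [← sub_eq_zero.1 (Int.eq_zero_of_abs_lt_dvd hdvd hsmall)]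

theorem le_card_mul_of_forall_abs_valMinAbs_sub_le {N d : ℕ} [NeZero N] (hd : 3 * d < N)
    {ι : Type*} [Fintype ι] [DecidableEq ι] (color : ZMod N → ι)
    (h : ∀ a b, color a = color b → |(a - b).valMinAbs| ≤ d) :
    N ≤ Fintype.card ι * (d + 1) := by
  calc N = (Finset.univ : Finset (ZMod N)).card := (card N).symm
    _ = ∑ i, (Finset.univ.filter fun a => color a = i).card :=
      Finset.card_eq_sum_card_fiberwise fun a _ => Finset.mem_univ (color a)
    _ ≤ ∑ _i : ι, (d + 1) := Finset.sum_le_sum fun i _ =>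
      card_le_of_forall_abs_valMinAbs_sub_le hd fun a ha b hb => h a b <| by
        simp only [Finset.mem_filter] at ha hb
        rw [ha.2, hb.2]
    _ = Fintype.card ι * (d + 1) := by simp

variable {N : ℕ} [NeZero N]

theorem dist_toCircle (a b : ZMod N) :
    dist (toCircle a : ℂ) (toCircle b) = 2 * |sin (π * (a - b).valMinAbs / N)| := by
  have h : (toCircle a : ℂ) = toCircle b * toCircle (a - b) := by
    rw [← Circle.coe_mul, ← AddChar.map_add_eq_mul, add_sub_cancel]
  rw [dist_eq_norm, h, ← mul_sub_one, norm_mul, Circle.norm_coe, one_mul,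
    ← coe_valMinAbs (a - b), toCircle_intCast, coe_valMinAbs]
  have harg : 2 * π * Complex.I * (a - b).valMinAbs / N
      = Complex.I * ((2 * π * (a - b).valMinAbs / N : ℝ) : ℂ) := by
    push_cast; ring
  rw [harg, Complex.norm_exp_I_mul_ofReal_sub_one, Real.norm_eq_abs, abs_mul, abs_two]
  ring_nf

theorem two_mul_sin_le_dist_toCircle {a b : ZMod N} {m : ℕ}
    (hm : (m : ℤ) ≤ |(a - b).valMinAbs|) :
    2 * sin (π * m / N) ≤ dist (toCircle a : ℂ) (toCircle b) := by
  have hN : (0 : ℝ) < N := Nat.cast_pos.2 (NeZero.pos N)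
  have hhalf : |((a - b).valMinAbs : ℝ)| * 2 ≤ N := by
    have := natAbs_valMinAbs_le (a - b)
    rw [← Int.cast_abs, Int.abs_eq_natAbs]
    exact_mod_cast (Nat.le_div_iff_mul_le two_pos).1 this
  have hm' : (m : ℝ) ≤ |((a - b).valMinAbs : ℝ)| := by
    rw [← Int.cast_abs]; exact_mod_cast hm
  rw [dist_toCircle, abs_sin_eq_sin_abs_of_abs_le_pi, abs_div, abs_mul, abs_of_pos pi_pos,
    abs_of_pos hN]
  · gcongr
    have : 0 ≤ π * m / N := by positivity
    refine sin_le_sin_of_le_of_le_pi_div_two (by linarith [pi_pos]) ?_ (by gcongr)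
    rw [div_le_iff₀ hN]; nlinarith [pi_pos]
  · rw [abs_div, abs_mul, abs_of_pos pi_pos, abs_of_pos hN, div_le_iff₀ hN]; nlinarith [pi_pos]

end ZMod

theorem tendsto_sin_pi_mul_div_mul_add_one {k : ℕ} (hk : k ≠ 0) :
    Tendsto (fun m : ℕ => sin (π * m / (k * m + 1))) atTop (𝓝 (sin (π / k))) := by
  have hk' : (k : ℝ) ≠ 0 := by exact_mod_cast hk
  have h := ((tendsto_natCast_div_add_atTop ((k : ℝ)⁻¹)).const_mul (π / k))
  rw [mul_one] at h
  refine (continuous_sin.tendsto _).comp (h.congr fun m => ?_)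
  field_simp

theorem two_mul_mul_sin_pi_div_card_le_of_sphere_subset_iUnion {ι : Type*} [Fintype ι]
    (hι : 3 ≤ Fintype.card ι) {c : ℂ} {r D : ℝ} (hr : 0 ≤ r) {S : ι → Set ℂ}
    (hcover : sphere c r ⊆ ⋃ i, S i)
    (hD : ∀ i, ∀ x ∈ S i, ∀ y ∈ S i, dist x y ≤ D) :
    2 * r * sin (π / Fintype.card ι) ≤ D := by
  classical
  set k := Fintype.card ι with hk
  by_contra! hlt
  -- `π m / (k m + 1)` tends to `π / k`; here `m = d + 1`
  obtain ⟨d, hd⟩ :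
      ∃ d : ℕ, D < 2 * r * sin (π * (d + 1 : ℕ) / (k * (d + 1 : ℕ) + 1)) :=
    ((((tendsto_sin_pi_mul_div_mul_add_one (by omega)).const_mul (2 * r)).comp
      (tendsto_add_atTop_nat 1)).eventually (lt_mem_nhds hlt)).exists
  set N := k * (d + 1) + 1 with hN
  have : NeZero N := ⟨by omega⟩
  have hmem : ∀ a : ZMod N, c + r * (ZMod.toCircle a : ℂ) ∈ ⋃ i, S i := fun a =>
    hcover (by simp [Circle.norm_coe, abs_of_nonneg hr])
  choose color hcolor using fun a => mem_iUnion.1 (hmem a)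
  have hclose : ∀ a b, color a = color b → |(a - b).valMinAbs| ≤ d := by
    intro a b hab
    by_contra! hfar
    have hsin := ZMod.two_mul_sin_le_dist_toCircle (a := a) (b := b) (m := d + 1) (by omega)
    have hdist := hD (color a) _ (hcolor a) _ (hab ▸ hcolor b)
    rw [dist_add_left, dist_eq_norm, ← mul_sub, norm_mul, Complex.norm_real,
      Real.norm_of_nonneg hr, ← dist_eq_norm] at hdist
    push_cast [hN] at hsin hd
    nlinarith [mul_le_mul_of_nonneg_left hsin hr]
  have h3k : 3 * (d + 1) ≤ k * (d + 1) := Nat.mul_le_mul_right (d + 1) hι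
  have := ZMod.le_card_mul_of_forall_abs_valMinAbs_sub_le (by omega) color hclose
  rw [← hk] at this
  omega

theorem inradius_le_of_forall_closedBall_subset {C : Set ℂ} {b : ℝ} (hb : 0 ≤ b)
    (h : ∀ c r, closedBall c r ⊆ C → r ≤ b) : inradius C ≤ b :=
  Real.sSup_le (fun _ ⟨c, hc⟩ => h c _ hc) hb

/-- For any `k`-subdivision (`k ≥ 3`) of a `k`-rotationally symmetric planar convex
body with inradius `r`, the maximum relative diameter is at least `2·r·sin(π/k)`. -/
theorem inradius_bound_le_maxRelDiam_subdivision
    (k : ℕ) (hk : 3 ≤ k) (p : ℂ) (C : Set ℂ) (hC : IsRotSymConvexBody k p C)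
    (S : Fin k → Set ℂ) (hS : IsSubdivision C k S) :
    2 * inradius C * Real.sin (Real.pi / k) ≤ ⨆ i, Metric.diam (S i) := by
  obtain ⟨hCc, -, -, -⟩ := hC
  obtain ⟨hSC, -, hSU, -⟩ := hS
  set X := ⨆ i, diam (S i)
  have hdiam : ∀ i, diam (S i) ≤ X := le_ciSup (finite_range _).bddAbove
  have hX : 0 ≤ X := diam_nonneg.trans (hdiam ⟨0, by omega⟩)
  have hsin : 0 < sin (π / k) :=
    sin_pos_of_pos_of_lt_pi (by positivity) (div_lt_self pi_pos (by norm_cast; omega))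
  have hball : ∀ c r, closedBall c r ⊆ C → r ≤ X / (2 * sin (π / k)) := by
    intro c r hr
    rcases lt_or_ge r 0 with hneg | hnonneg
    · exact hneg.le.trans (by positivity)
    rw [le_div_iff₀ (by positivity), ← mul_assoc, mul_comm r]
    simpa using two_mul_mul_sin_pi_div_card_le_of_sphere_subset_iUnion (by simpa using hk)
      hnonneg (sphere_subset_closedBall.trans (hr.trans hSU.symm.subset)) fun i x hx y hy =>
        (dist_le_diam_of_mem (hCc.isBounded.subset (hSC i)) hx hy).trans (hdiam i)
  have := inradius_le_of_forall_closedBall_subset (by positivity) hball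
  rw [le_div_iff₀ (by positivity)] at this
  linarith
end

section
/- Fix an integer k ≥ 3. Let C be a k-rotationally symmetric planar convex body whose circumradius satisfies R(C) ≤ 1 and whose inradius satisfies r(C) ≤ 1/(2·sin(π/k)) (equivalently, the maximum relative diameter of its standard k-partition, max{R(C), 2·r(C)·sin(π/k)}, is at most 1). Then the area of C is at most the area of D ∩ T, where D is the closed unit disk centered at the origin and T is the regular k-gon with inradius 1/(2·sin(π/k)) centered at the origin; moreover equality holds if and only if C is a translate of a rotate of D ∩ T. Consequently, among all k-rotationally symmetric planar convex bodies, the ratio d_M(P_k(C), C)²/Area(C) is minimized, uniquely up to dilations, rotations and translations, by D ∩ T. -/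
open Metric Set MeasureTheory

/-- The regular `k`-gon with inradius `a` centered at the origin: the intersection of
the half-planes `{x : ⟨x, u_j⟩ ≤ a}` with `u_j = e^{2πij/k}`, `j = 0, …, k−1`. -/
noncomputable def regularKGon (k : ℕ) (a : ℝ) : Set ℂ :=
  {x : ℂ | ∀ j < k,
    (x * (starRingEnd ℂ)
      (Complex.exp (((2 * Real.pi * j / k : ℝ) : ℂ) * Complex.I))).re ≤ a}

/-!
Averaging an enclosing disk over the orbit of the rotation by `2π/k` about `p` shows that `C`
lies in the disk of radius `R(C) ≤ 1` about `p`. A boundary point `q` of `C` nearest to `p`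
satisfies `|q - p| ≤ r(C) ≤ 1/(2 sin(π/k))`, and the supporting line of `C` at `q` together
with its `k` rotated copies bounds a regular `k`-gon about `p` of inradius at most
`1/(2 sin(π/k))`. Hence `C` lies in a rotated and translated copy of `D ∩ T`, which gives the
area bound; in case of equality `C` is a closed subset of full measure of that convex body,
hence all of it.
-/

open scoped ComplexConjugate InnerProductSpace

theorem Isometry.volume_image {V : Type*} [NormedAddCommGroup V] [InnerProductSpace ℝ V]
    [FiniteDimensional ℝ V] [MeasurableSpace V] [BorelSpace V] {f : V → V} (hf : Isometry f)
    (s : Set V) : volume (f '' s) = volume s := by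
  rw [← InnerProductSpace.euclideanHausdorffMeasure_eq_volume]
  exact hf.euclideanHausdorffMeasure_image s

theorem Convex.subset_of_measure_diff_eq_zero {E : Type*} [AddCommGroup E] [Module ℝ E]
    [TopologicalSpace E] [IsTopologicalAddGroup E] [ContinuousSMul ℝ E] [MeasurableSpace E]
    {μ : Measure E} [μ.IsOpenPosMeasure] {K C : Set E} (hK : Convex ℝ K)
    (hKint : (interior K).Nonempty) (hC : IsClosed C) (hμ : μ (K \ C) = 0) : K ⊆ C := by
  intro x hxK
  by_contra hxC
  have hx : x ∈ closure (interior K) :=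
    hK.closure_interior_eq_closure_of_nonempty_interior hKint ▸ subset_closure hxK
  have hU : (Cᶜ ∩ interior K).Nonempty := _root_.mem_closure_iff.1 hx _ hC.isOpen_compl hxC
  have hUK : Cᶜ ∩ interior K ⊆ K \ C := fun _ hz => ⟨interior_subset hz.2, hz.1⟩
  exact ((hC.isOpen_compl.inter isOpen_interior).measure_pos μ hU).ne' (measure_mono_null hUK hμ)

theorem exists_forall_inner_sub_le_infDist_compl {E : Type*} [NormedAddCommGroup E]
    [InnerProductSpace ℝ E] [ProperSpace E] {C : Set E} (hC : Convex ℝ C)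
    (hCint : (interior C).Nonempty) (hCc : Cᶜ.Nonempty) (p : E) :
    ∃ u : E, ‖u‖ = 1 ∧ ∀ x ∈ C, ⟪u, x - p⟫_ℝ ≤ infDist p Cᶜ := by
  obtain ⟨q, hq, hpq⟩ := exists_mem_closure_infDist_eq_dist hCc p
  rw [closure_compl] at hq
  obtain ⟨f, hf0, hf⟩ := geometric_hahn_banach_of_nonempty_interior_point hC hq hCint
  set w := (InnerProductSpace.toDual ℝ E).symm f
  have hw : w ≠ 0 := by simpa [w] using hf0
  refine ⟨‖w‖⁻¹ • w, by simp [norm_smul, hw], fun x hx => ?_⟩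
  have hxq : ⟪‖w‖⁻¹ • w, x - q⟫_ℝ ≤ 0 := by
    rw [real_inner_smul_left, inner_sub_right, InnerProductSpace.toDual_symm_apply,
      InnerProductSpace.toDual_symm_apply]
    exact mul_nonpos_of_nonneg_of_nonpos (by positivity) (sub_nonpos.2 (hf x hx))
  calc ⟪‖w‖⁻¹ • w, x - p⟫_ℝ = ⟪‖w‖⁻¹ • w, x - q⟫_ℝ + ⟪‖w‖⁻¹ • w, q - p⟫_ℝ := by
        rw [← inner_add_right, sub_add_sub_cancel]
    _ ≤ 0 + ‖‖w‖⁻¹ • w‖ * ‖q - p‖ := add_le_add hxq (real_inner_le_norm _ _)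
    _ = infDist p Cᶜ := by simp [norm_smul, hw, hpq, dist_eq_norm']

theorem le_inradius_of_closedBall_subset {C : Set ℂ} (hC : Bornology.IsBounded C) {c : ℂ}
    {r : ℝ} (h : closedBall c r ⊆ C) : r ≤ inradius C := by
  refine le_csSup ⟨diam C / 2, ?_⟩ ⟨c, h⟩
  rintro s ⟨c', hs⟩
  rcases le_or_gt 0 s with hs0 | hs0
  · have hdiam := diam_mono hs hC
    rw [diam_closedBall_eq c' hs0] at hdiam
    linarith
  · linarith [diam_nonneg (s := C)]

theorem infDist_compl_le_inradius {C : Set ℂ} (hC : Bornology.IsBounded C) (p : ℂ) :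
    infDist p Cᶜ ≤ inradius C :=
  le_of_forall_lt_imp_le_of_dense fun _ hr =>
    le_inradius_of_closedBall_subset hC
      ((closedBall_subset_ball hr).trans ball_infDist_compl_subset)

theorem subset_closedBall_circumradius {C : Set ℂ} {p : ℂ} (hC : Bornology.IsBounded C)
    (h : ∀ c R, C ⊆ closedBall c R → C ⊆ closedBall p R) :
    C ⊆ closedBall p (circumradius C) := by
  intro x hx
  obtain ⟨R, hR⟩ := hC.subset_closedBall p
  exact mem_closedBall.2 (le_csInf ⟨R, p, hR⟩ fun R ⟨c, hc⟩ => h c R hc hx)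

theorem iterate_rotation_apply (ζ p z : ℂ) (j : ℕ) :
    (fun z => p + ζ * (z - p))^[j] z = p + ζ ^ j * (z - p) := by
  induction j with
  | zero => simp
  | succ j ih => rw [Function.iterate_succ_apply', ih]; ring

theorem exists_mem_sub_eq_pow_mul_of_surjOn {ζ p : ℂ} {C : Set ℂ}
    (hC : SurjOn (fun z => p + ζ * (z - p)) C C) {x : ℂ} (hx : x ∈ C) (j : ℕ) :
    ∃ y ∈ C, x - p = ζ ^ j * (y - p) := by
  obtain ⟨y, hy, rfl⟩ := hC.iterate j hx
  exact ⟨y, hy, by rw [iterate_rotation_apply]; ring⟩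

theorem subset_closedBall_of_surjOn_rotation {k : ℕ} (hk : 1 < k) {ζ p c : ℂ}
    (hζ : IsPrimitiveRoot ζ k) {C : Set ℂ} (hC : SurjOn (fun z => p + ζ * (z - p)) C C)
    {R : ℝ} (hR : C ⊆ closedBall c R) : C ⊆ closedBall p R := by
  intro x hx
  have hterm : ∀ j, ‖x - p - ζ ^ j * (c - p)‖ ≤ R := fun j => by
    obtain ⟨y, hy, hxy⟩ := exists_mem_sub_eq_pow_mul_of_surjOn hC hx j
    rw [hxy, ← mul_sub, sub_sub_sub_cancel_right, norm_mul, norm_pow, hζ.norm'_eq_one (by omega),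
      one_pow, one_mul, ← dist_eq_norm]
    exact hR hy
  have hsum : ∑ j ∈ Finset.range k, (x - p - ζ ^ j * (c - p)) = k * (x - p) := by
    rw [Finset.sum_sub_distrib, ← Finset.sum_mul, hζ.geom_sum_eq_zero hk]
    simp [mul_sub]
  have hkR : (k : ℝ) * dist x p ≤ k * R := calc
    (k : ℝ) * dist x p = ‖∑ j ∈ Finset.range k, (x - p - ζ ^ j * (c - p))‖ := by
      rw [hsum, norm_mul, Complex.norm_natCast, dist_eq_norm]
    _ ≤ ∑ j ∈ Finset.range k, ‖x - p - ζ ^ j * (c - p)‖ := norm_sum_le _ _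
    _ ≤ ∑ _j ∈ Finset.range k, R := Finset.sum_le_sum fun j _ => hterm j
    _ = k * R := by simp
  exact mem_closedBall.2 (le_of_mul_le_mul_left hkR (by positivity))

noncomputable def rigidMotion (θ : ℝ) (v : ℂ) : ℂ ≃ᵃⁱ[ℝ] ℂ :=
  (rotation (Circle.exp θ)).toAffineIsometryEquiv.trans (AffineIsometryEquiv.constVAdd ℝ ℂ v)

theorem coe_rigidMotion (θ : ℝ) (v : ℂ) :
    ⇑(rigidMotion θ v) = fun z => v + Complex.exp ((θ : ℂ) * Complex.I) * z := by
  ext z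
  simp [rigidMotion, Circle.coe_exp]

theorem exp_two_pi_mul_div_mul_I_eq_pow (j k : ℕ) :
    Complex.exp (((2 * Real.pi * j / k : ℝ) : ℂ) * Complex.I)
      = Complex.exp (2 * Real.pi * Complex.I / k) ^ j := by
  rw [← Complex.exp_nat_mul]
  congr 1
  push_cast
  ring

theorem regularKGon_eq_iInter (k : ℕ) (a : ℝ) :
    regularKGon k a = ⋂ j < k,
      {x | ⟪Complex.exp (((2 * Real.pi * j / k : ℝ) : ℂ) * Complex.I), x⟫_ℝ ≤ a} := by
  ext x
  simp [regularKGon, Complex.inner]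

theorem convex_regularKGon (k : ℕ) (a : ℝ) : Convex ℝ (regularKGon k a) := by
  rw [regularKGon_eq_iInter]
  exact convex_iInter₂ fun _ _ => convex_halfSpace_le (innerₛₗ ℝ _).isLinear a

theorem closedBall_subset_regularKGon (k : ℕ) (a : ℝ) : closedBall 0 a ⊆ regularKGon k a := by
  intro x hx j _
  rw [← Complex.inner]
  calc _ ≤ ‖Complex.exp (((2 * Real.pi * j / k : ℝ) : ℂ) * Complex.I)‖ * ‖x‖ :=
        real_inner_le_norm _ _
    _ ≤ a := by rw [Complex.norm_exp_ofReal_mul_I, one_mul]; simpa using hx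

theorem IsRotSymConvexBody.exists_subset_image_rigidMotion {k : ℕ} (hk : 1 < k) {p : ℂ}
    {C : Set ℂ} (hC : IsRotSymConvexBody k p C) (hR : circumradius C ≤ 1) {a : ℝ}
    (hr : inradius C ≤ a) :
    ∃ θ : ℝ, C ⊆ rigidMotion θ p '' (closedBall 0 1 ∩ regularKGon k a) := by
  obtain ⟨hCcpt, hCconv, hCint, hsym⟩ := hC
  set ω := Complex.exp (2 * Real.pi * Complex.I / k)
  have hω : IsPrimitiveRoot ω k := Complex.isPrimitiveRoot_exp k (by omega)
  have hsurj : SurjOn (fun z => p + ω * (z - p)) C C := hsym.symm.subset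
  have hball : C ⊆ closedBall p 1 :=
    (subset_closedBall_circumradius hCcpt.isBounded fun _ _ =>
      subset_closedBall_of_surjOn_rotation hk hω hsurj).trans (closedBall_subset_closedBall hR)
  have hCc : Cᶜ.Nonempty :=
    nonempty_compl.2 fun h => NormedSpace.unbounded_univ ℝ ℂ (h ▸ hCcpt.isBounded)
  obtain ⟨u, hu, hsupp⟩ := exists_forall_inner_sub_le_infDist_compl hCconv hCint hCc p
  refine ⟨Complex.arg u, fun x hx => ⟨conj u * (x - p), ⟨?_, fun j _ => ?_⟩, ?_⟩⟩
  · simpa [hu, ← dist_eq_norm] using hball hx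
  · obtain ⟨y, hy, hxy⟩ := exists_mem_sub_eq_pow_mul_of_surjOn hsurj hx j
    have hωj : conj (ω ^ j) * ω ^ j = 1 := by
      rw [Complex.conj_mul', norm_pow, hω.norm'_eq_one (by omega)]
      simp
    calc _ = ((y - p) * conj u).re := by
          rw [exp_two_pi_mul_div_mul_I_eq_pow, hxy]
          congr 1
          linear_combination (conj u * (y - p)) * hωj
      _ = ⟪u, y - p⟫_ℝ := (Complex.inner u (y - p)).symm
      _ ≤ infDist p Cᶜ := hsupp y hy
      _ ≤ inradius C := infDist_compl_le_inradius hCcpt.isBounded p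
      _ ≤ a := hr
  · have hu_exp : Complex.exp (Complex.arg u * Complex.I) = u := by
      simpa [hu] using Complex.norm_mul_exp_arg_mul_I u
    have hu_conj : u * conj u = 1 := by simp [Complex.mul_conj', hu]
    rw [coe_rigidMotion]
    dsimp only
    rw [hu_exp]
    linear_combination (x - p) * hu_conj

theorem zero_mem_interior_closedBall_inter_regularKGon (k : ℕ) {a : ℝ} (ha : 0 < a) :
    (0 : ℂ) ∈ interior (closedBall 0 1 ∩ regularKGon k a) := by
  refine mem_interior.2 ⟨ball 0 (min 1 a), fun z hz => ⟨?_, ?_⟩, isOpen_ball,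
    mem_ball_self (lt_min one_pos ha)⟩
  · exact ball_subset_closedBall (ball_subset_ball (min_le_left 1 a) hz)
  · exact closedBall_subset_regularKGon k a
      (ball_subset_closedBall (ball_subset_ball (min_le_right 1 a) hz))

/-- Optimal bodies: if a `k`-rotationally symmetric planar convex body (`k ≥ 3`)
satisfies `R(C) ≤ 1` and `r(C) ≤ 1/(2 sin(π/k))` (i.e. the maximum relative diameter
of its standard `k`-partition is at most `1`), then its area is at most that of the
intersection of the closed unit disk `D` with the regular `k`-gon `T` of inradius
`1/(2 sin(π/k))`, with equality exactly when `C` is a translate of a rotate of `D ∩ T`. -/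
theorem optimal_body_is_disk_inter_kgon
    (k : ℕ) (hk : 3 ≤ k) (p : ℂ) (C : Set ℂ) (hC : IsRotSymConvexBody k p C)
    (hR : circumradius C ≤ 1)
    (hr : inradius C ≤ 1 / (2 * Real.sin (Real.pi / k))) :
    volume C ≤ volume (closedBall (0 : ℂ) 1 ∩ regularKGon k (1 / (2 * Real.sin (Real.pi / k)))) ∧
    (volume C = volume (closedBall (0 : ℂ) 1 ∩ regularKGon k (1 / (2 * Real.sin (Real.pi / k)))) ↔
      ∃ (θ : ℝ) (v : ℂ), C = (fun z => v + Complex.exp ((θ : ℂ) * Complex.I) * z) ''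
        (closedBall (0 : ℂ) 1 ∩ regularKGon k (1 / (2 * Real.sin (Real.pi / k))))) := by
  set a := 1 / (2 * Real.sin (Real.pi / k))
  set M := closedBall (0 : ℂ) 1 ∩ regularKGon k a
  have ha : 0 < a := by
    have : 0 < Real.sin (Real.pi / k) := Real.sin_pos_of_pos_of_lt_pi (by positivity)
      (div_lt_self Real.pi_pos (by exact_mod_cast (by omega : 1 < k)))
    positivity
  have hvol : ∀ θ v, volume (rigidMotion θ v '' M) = volume M :=
    fun θ v => (rigidMotion θ v).isometry.volume_image M
  obtain ⟨θ, hsub⟩ := hC.exists_subset_image_rigidMotion (by omega) hR hr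
  refine ⟨(measure_mono hsub).trans (hvol θ p).le, fun heq => ⟨θ, p, ?_⟩, ?_⟩
  · rw [← coe_rigidMotion]
    refine hsub.antisymm (Convex.subset_of_measure_diff_eq_zero (μ := volume) ?_ ?_
      hC.1.isClosed ?_)
    · exact ((convex_closedBall 0 1).inter (convex_regularKGon k a)).affine_image
        (rigidMotion θ p).toAffineEquiv.toAffineMap
    · exact ⟨_, (rigidMotion θ p).toHomeomorph.isOpenMap.image_interior_subset M
        (mem_image_of_mem _ (zero_mem_interior_closedBall_inter_regularKGon k ha))⟩
    · rw [measure_sdiff hsub hC.1.measurableSet.nullMeasurableSet hC.1.measure_lt_top.ne,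
        hvol, heq, tsub_self]
  · rintro ⟨θ', v, rfl⟩
    rw [← coe_rigidMotion]
    exact hvol θ' v
end

section
/- Let k > 0 be a real number and let f₃, f₄, f₅, f₆, f₇, f₈, f₉, g be nonnegative real numbers satisfying f₃ + f₄ + f₅ + f₆ + f₇ + f₈ + f₉ + g = k and 3f₃ + 4f₄ + 5f₅ + 6f₆ + 7f₇ + 8f₈ + 9f₉ + 10g ≤ 6k. Then m₃f₃ + m₄f₄ + m₅f₅ + m₆f₆ + m₇f₇ + m₈f₈ + m₉f₉ + (π/4)g ≤ k·(m₅ + m₇)/2, where m₃ = √3/4, m₄ = 1/2, m₅ = (5/2)cos(π/5)tan(π/10), m₆ = 0.6749814429, m₇ = (7/2)cos(π/7)tan(π/14), m₈ = 0.7268684828, m₉ = (9/2)cos(π/9)tan(π/18). Moreover the maximum k·(m₅ + m₇)/2 ≈ 0.688452·k is attained at f₅ = f₇ = k/2 and all other variables zero. -/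
/-!
Weak LP duality. Let `m_j` be the coefficient of `f_j` (with `m₁₀ = π/4` for `g`). The line
`j ↦ a + b j` through `(5, m₅)` and `(7, m₇)` has slope `b = (m₇ - m₅)/2 ≥ 0` and lies above
every point `(j, m_j)`, so adding `a` times the face count and `b` times the edge inequality gives
`∑ m_j f_j ≤ a k + 6 b k = k (m₅ + m₇)/2`. Checking that the line dominates needs `m₅`, `m₇`,
`m₉` only to about two decimals, which the Taylor bounds `Real.cos_bound`, `Real.sin_bound` at
`π / n` provide, using `3.141592 < π < 3.141593`.
-/

open Real Set

theorem sum_mul_le_of_le_add_mul {ι : Type*} (s : Finset ι) {c e f : ι → ℝ} {a b k E : ℝ}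
    (hb : 0 ≤ b) (hf : ∀ i ∈ s, 0 ≤ f i) (hc : ∀ i ∈ s, c i ≤ a + b * e i)
    (hk : ∑ i ∈ s, f i = k) (hE : ∑ i ∈ s, e i * f i ≤ E) :
    ∑ i ∈ s, c i * f i ≤ a * k + b * E :=
  calc ∑ i ∈ s, c i * f i ≤ ∑ i ∈ s, (a + b * e i) * f i :=
        Finset.sum_le_sum fun i hi ↦ mul_le_mul_of_nonneg_right (hc i hi) (hf i hi)
    _ = a * ∑ i ∈ s, f i + b * ∑ i ∈ s, e i * f i := by
        simp only [add_mul, Finset.sum_add_distrib, Finset.mul_sum, mul_assoc]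
    _ ≤ a * k + b * E := by rw [hk]; gcongr

theorem pi_div_mem_Icc {d : ℝ} (hd : 0 < d) : π / d ∈ Icc (3.141592 / d) (3.141593 / d) :=
  ⟨by gcongr; exact pi_gt_d6.le, by gcongr; exact pi_lt_d6.le⟩

theorem cos_mem_Icc_of_mem_Icc {a b x : ℝ} (ha : 0 ≤ a) (hb : b ≤ 1) (hx : x ∈ Icc a b) :
    cos x ∈ Icc (1 - b ^ 2 / 2 - b ^ 4 * (5 / 96)) (1 - a ^ 2 / 2 + b ^ 4 * (5 / 96)) := by
  have hx0 : 0 ≤ x := ha.trans hx.1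
  have h := abs_le.1 (Real.cos_bound (x := x) (by rw [abs_of_nonneg hx0]; linarith [hx.2]))
  rw [abs_of_nonneg hx0] at h
  have h2 : a ^ 2 ≤ x ^ 2 := pow_le_pow_left₀ ha hx.1 2
  have h2' : x ^ 2 ≤ b ^ 2 := pow_le_pow_left₀ hx0 hx.2 2
  have h4 : x ^ 4 ≤ b ^ 4 := pow_le_pow_left₀ hx0 hx.2 4
  constructor <;> linarith [h.1, h.2]

theorem sin_mem_Icc_of_mem_Icc {a b x : ℝ} (ha : 0 ≤ a) (hb : b ≤ 1) (hx : x ∈ Icc a b) :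
    sin x ∈ Icc (a - b ^ 3 / 6) (b - a ^ 3 / 6 + b ^ 5 / 100) := by
  have hx0 : 0 ≤ x := ha.trans hx.1
  have h := abs_le.1 (Real.sin_bound (x := x) (by rw [abs_of_nonneg hx0]; linarith [hx.2]))
  rw [abs_of_nonneg hx0] at h
  have h3 : a ^ 3 ≤ x ^ 3 := pow_le_pow_left₀ ha hx.1 3
  have h3' : x ^ 3 ≤ b ^ 3 := pow_le_pow_left₀ hx0 hx.2 3
  have h5 : x ^ 5 ≤ b ^ 5 := pow_le_pow_left₀ hx0 hx.2 5
  exact ⟨by linarith [sin_ge_sub_cube hx0, hx.1], by linarith [h.2, hx.2]⟩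

theorem tan_mem_Icc_of_mem_Icc {a b x : ℝ} (ha : 0 ≤ a) (hb : b ≤ 1) (hx : x ∈ Icc a b)
    (hsin : 0 ≤ a - b ^ 3 / 6) :
    tan x ∈ Icc ((a - b ^ 3 / 6) / (1 - a ^ 2 / 2 + b ^ 4 * (5 / 96)))
      ((b - a ^ 3 / 6 + b ^ 5 / 100) / (1 - b ^ 2 / 2 - b ^ 4 * (5 / 96))) := by
  obtain ⟨hs₁, hs₂⟩ := sin_mem_Icc_of_mem_Icc ha hb hx
  obtain ⟨hc₁, hc₂⟩ := cos_mem_Icc_of_mem_Icc ha hb hx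
  have hc : 0 < 1 - b ^ 2 / 2 - b ^ 4 * (5 / 96) := by
    have : b ^ 2 ≤ 1 := pow_le_one₀ (ha.trans (hx.1.trans hx.2)) hb
    have : b ^ 4 ≤ 1 := pow_le_one₀ (ha.trans (hx.1.trans hx.2)) hb
    linarith
  rw [tan_eq_sin_div_cos]
  exact ⟨div_le_div₀ (hsin.trans hs₁) hs₁ (hc.trans_le hc₁) hc₂,
    div_le_div₀ (hsin.trans (hs₁.trans hs₂)) hs₂ hc hc₁⟩

theorem regular_pentagon_area_mem_Icc :
    5 / 2 * cos (π / 5) * tan (π / 10) ∈ Icc (0.6441 : ℝ) 0.6603 := by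
  obtain ⟨hc₁, hc₂⟩ := cos_mem_Icc_of_mem_Icc (by norm_num) (by norm_num)
    (pi_div_mem_Icc (d := 5) (by norm_num))
  obtain ⟨ht₁, ht₂⟩ := tan_mem_Icc_of_mem_Icc (by norm_num) (by norm_num)
    (pi_div_mem_Icc (d := 10) (by norm_num)) (by norm_num)
  norm_num only at hc₁ hc₂ ht₁ ht₂
  constructor <;> nlinarith

theorem regular_heptagon_area_mem_Icc :
    7 / 2 * cos (π / 7) * tan (π / 14) ∈ Icc (0.7162 : ℝ) 0.7208 := by
  obtain ⟨hc₁, hc₂⟩ := cos_mem_Icc_of_mem_Icc (by norm_num) (by norm_num)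
    (pi_div_mem_Icc (d := 7) (by norm_num))
  obtain ⟨ht₁, ht₂⟩ := tan_mem_Icc_of_mem_Icc (by norm_num) (by norm_num)
    (pi_div_mem_Icc (d := 14) (by norm_num)) (by norm_num)
  norm_num only at hc₁ hc₂ ht₁ ht₂
  constructor <;> nlinarith

theorem regular_nonagon_area_le :
    9 / 2 * cos (π / 9) * tan (π / 18) ≤ 0.7461 := by
  obtain ⟨-, hc₂⟩ := cos_mem_Icc_of_mem_Icc (by norm_num) (by norm_num)
    (pi_div_mem_Icc (d := 9) (by norm_num))
  obtain ⟨ht₁, ht₂⟩ := tan_mem_Icc_of_mem_Icc (by norm_num) (by norm_num)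
    (pi_div_mem_Icc (d := 18) (by norm_num)) (by norm_num)
  norm_num only at hc₂ ht₁ ht₂
  nlinarith

theorem lp_step_general (k f3 f4 f5 f6 f7 f8 f9 g : ℝ)
    (h3 : 0 ≤ f3) (h4 : 0 ≤ f4) (h5 : 0 ≤ f5) (h6 : 0 ≤ f6) (h7 : 0 ≤ f7)
    (h8 : 0 ≤ f8) (h9 : 0 ≤ f9) (hg : 0 ≤ g)
    (hsum : f3 + f4 + f5 + f6 + f7 + f8 + f9 + g = k)
    (hedges : 3 * f3 + 4 * f4 + 5 * f5 + 6 * f6 + 7 * f7 + 8 * f8 + 9 * f9 + 10 * g ≤ 6 * k) :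
    (Real.sqrt 3 / 4) * f3 + (1 / 2) * f4 +
      (5 / 2 * Real.cos (Real.pi / 5) * Real.tan (Real.pi / 10)) * f5 +
      0.6749814429 * f6 +
      (7 / 2 * Real.cos (Real.pi / 7) * Real.tan (Real.pi / 14)) * f7 +
      0.7268684828 * f8 +
      (9 / 2 * Real.cos (Real.pi / 9) * Real.tan (Real.pi / 18)) * f9 +
      (Real.pi / 4) * g ≤
    k * ((5 / 2 * Real.cos (Real.pi / 5) * Real.tan (Real.pi / 10)) +
      (7 / 2 * Real.cos (Real.pi / 7) * Real.tan (Real.pi / 14))) / 2 ∧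
    (5 / 2 * Real.cos (Real.pi / 5) * Real.tan (Real.pi / 10)) * (k / 2) +
      (7 / 2 * Real.cos (Real.pi / 7) * Real.tan (Real.pi / 14)) * (k / 2) =
    k * ((5 / 2 * Real.cos (Real.pi / 5) * Real.tan (Real.pi / 10)) +
      (7 / 2 * Real.cos (Real.pi / 7) * Real.tan (Real.pi / 14))) / 2 := by
  obtain ⟨hm5₁, hm5₂⟩ := regular_pentagon_area_mem_Icc
  obtain ⟨hm7₁, hm7₂⟩ := regular_heptagon_area_mem_Icc
  have hm9 := regular_nonagon_area_le
  set m5 := 5 / 2 * cos (π / 5) * tan (π / 10)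
  set m7 := 7 / 2 * cos (π / 7) * tan (π / 14)
  set m9 := 9 / 2 * cos (π / 9) * tan (π / 18)
  refine ⟨?_, by ring⟩
  have hsqrt3 : √3 < 2 := by rw [sqrt_lt' two_pos]; norm_num
  have hπ := pi_lt_d2
  have key := sum_mul_le_of_le_add_mul Finset.univ (f := ![f3, f4, f5, f6, f7, f8, f9, g])
    (e := ![3, 4, 5, 6, 7, 8, 9, 10])
    (c := ![√3 / 4, 1 / 2, m5, 0.6749814429, m7, 0.7268684828, m9, π / 4])
    (a := (7 * m5 - 5 * m7) / 2) (b := (m7 - m5) / 2) (k := k) (E := 6 * k) (by linarith)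
    (fun i _ ↦ by fin_cases i <;> assumption)
    (fun i _ ↦ by fin_cases i <;> norm_num <;> linarith)
    (by simp only [Fin.sum_univ_eight, Matrix.cons_val]; linarith)
    (by simp only [Fin.sum_univ_eight, Matrix.cons_val]; linarith)
  simp only [Fin.sum_univ_eight, Matrix.cons_val] at key
  linarith

/-- The linear programming step: if `f₃, …, f₉, g ≥ 0` satisfy
`f₃ + ⋯ + f₉ + g = k` and `3f₃ + 4f₄ + ⋯ + 9f₉ + 10g ≤ 6k`, then
`m₃f₃ + ⋯ + m₉f₉ + (π/4)g ≤ k·(m₅ + m₇)/2`, where the `m_j` are the maximal areas of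
convex polygons with `j` edges and diameter `1`.  The maximum is attained at
`f₅ = f₇ = k/2` and all other variables zero. -/
theorem lp_step (k f3 f4 f5 f6 f7 f8 f9 g : ℝ) (hk : 0 < k)
    (h3 : 0 ≤ f3) (h4 : 0 ≤ f4) (h5 : 0 ≤ f5) (h6 : 0 ≤ f6) (h7 : 0 ≤ f7)
    (h8 : 0 ≤ f8) (h9 : 0 ≤ f9) (hg : 0 ≤ g)
    (hsum : f3 + f4 + f5 + f6 + f7 + f8 + f9 + g = k)
    (hedges : 3 * f3 + 4 * f4 + 5 * f5 + 6 * f6 + 7 * f7 + 8 * f8 + 9 * f9 + 10 * g ≤ 6 * k) :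
    (Real.sqrt 3 / 4) * f3 + (1 / 2) * f4 +
      (5 / 2 * Real.cos (Real.pi / 5) * Real.tan (Real.pi / 10)) * f5 +
      0.6749814429 * f6 +
      (7 / 2 * Real.cos (Real.pi / 7) * Real.tan (Real.pi / 14)) * f7 +
      0.7268684828 * f8 +
      (9 / 2 * Real.cos (Real.pi / 9) * Real.tan (Real.pi / 18)) * f9 +
      (Real.pi / 4) * g ≤
    k * ((5 / 2 * Real.cos (Real.pi / 5) * Real.tan (Real.pi / 10)) +
      (7 / 2 * Real.cos (Real.pi / 7) * Real.tan (Real.pi / 14))) / 2 ∧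
    (5 / 2 * Real.cos (Real.pi / 5) * Real.tan (Real.pi / 10)) * (k / 2) +
      (7 / 2 * Real.cos (Real.pi / 7) * Real.tan (Real.pi / 14)) * (k / 2) =
    k * ((5 / 2 * Real.cos (Real.pi / 5) * Real.tan (Real.pi / 10)) +
      (7 / 2 * Real.cos (Real.pi / 7) * Real.tan (Real.pi / 14))) / 2 :=
  lp_step_general k f3 f4 f5 f6 f7 f8 f9 g h3 h4 h5 h6 h7 h8 h9 hg hsum hedges
end
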